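/- Let p ≥ 1, L ≥ 1 be integers and λ > 0. For each ℓ = 0, …, L−1 let M_ℓ ≥ 1 be an integer, X_ℓ a real M_ℓ×p matrix, φ_ℓ ∈ ℝ^p a vector with at most q_ℓ nonzero entries, E_ℓ ∈ ℝ^{M_ℓ}, Y_ℓ = X_ℓφ_ℓ + E_ℓ, Γ̂_ℓ = X_ℓᵀX_ℓ/M_ℓ, and let φ̂_ℓ ∈ ℝ^p be any minimizer over β ∈ ℝ^p of (1/M_ℓ)‖Y_ℓ − X_ℓβ‖₂² + λ‖β‖₁. Assume for each ℓ < L: (i) the deviation condition ‖X_ℓᵀE_ℓ/M_ℓ‖_∞ ≤ λ/4, and (ii) Γ̂_ℓ satisfies the restricted eigenvalue condition RE(α_ℓ, τ_ℓ) with q_ℓ·τ_ℓ ≤ α_ℓ/32. Let (φ_ℓ)_{ℓ≥0} ⊂ ℝ^p satisfy ∑_{ℓ≥0} ‖φ_ℓ‖₂(2ℓ+1) < ∞, let k(z) = ∑_{ℓ=0}^∞ φ_ℓ·((2ℓ+1)/(4π))·P_ℓ(z) (the series converging absolutely and uniformly on [−1,1]), k_L = ∑_{ℓ=0}^{L−1}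 φ_ℓ·((2ℓ+1)/(4π))·P_ℓ, and k̂ = ∑_{ℓ=0}^{L−1} φ̂_ℓ·((2ℓ+1)/(4π))·P_ℓ. Then ‖k̂ − k‖_{L∞} ≤ (3/π)·λ·∑_{ℓ=0}^{L−1} (√(q_ℓ)/α_ℓ)(2ℓ+1) + ‖k − k_L‖_{L∞}. -/

import Mathlib

open Matrix Real Finset Filter

/-- The ℓ¹ norm on `Fin p → ℝ`. -/
noncomputable def l1 {p : ℕ} (v : Fin p → ℝ) : ℝ := ∑ i, |v i|

/-- The ℓ² (Euclidean) norm on `Fin n → ℝ`. -/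
noncomputable def l2 {n : ℕ} (v : Fin n → ℝ) : ℝ := Real.sqrt (∑ i, (v i) ^ 2)

/-- The ℓ∞ norm on `Fin p → ℝ`. -/
noncomputable def linf {p : ℕ} (v : Fin p → ℝ) : ℝ := ⨆ i, |v i|

/-- The restricted eigenvalue condition `RE(α, τ)`:
`θᵀAθ ≥ α‖θ‖₂² − τ‖θ‖₁²` for every `θ ∈ ℝ^p`. -/
def RECond {p : ℕ} (A : Matrix (Fin p) (Fin p) ℝ) (α τ : ℝ) : Prop :=
  ∀ θ : Fin p → ℝ, α * (l2 θ) ^ 2 - τ * (l1 θ) ^ 2 ≤ θ ⬝ᵥ (A *ᵥ θ)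

/-- The Legendre polynomial of degree `ℓ`, defined via Rodrigues' formula
`P_ℓ(u) = (1/(2^ℓ ℓ!)) (d/du)^ℓ (u² − 1)^ℓ`. -/
noncomputable def legendreP (ℓ : ℕ) (u : ℝ) : ℝ :=
  (1 / ((2 : ℝ) ^ ℓ * (Nat.factorial ℓ : ℝ))) *
    iteratedDeriv ℓ (fun x : ℝ => (x ^ 2 - 1) ^ ℓ) u

/-- The `ℓ`-th term `c_ℓ ((2ℓ+1)/(4π)) P_ℓ(z)` of a vector-valued Legendre series. -/
noncomputable def legendreTerm {p : ℕ} (c : ℕ → Fin p → ℝ) (ℓ : ℕ) (z : ℝ) : Fin p → ℝ :=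
  ((2 * (ℓ : ℝ) + 1) / (4 * π) * legendreP ℓ z) • c ℓ

/-- Partial sum `∑_{ℓ<n} c_ℓ ((2ℓ+1)/(4π)) P_ℓ(z)` of a vector-valued Legendre series. -/
noncomputable def legendreSum {p : ℕ} (c : ℕ → Fin p → ℝ) (n : ℕ) (z : ℝ) : Fin p → ℝ :=
  ∑ ℓ ∈ Finset.range n, legendreTerm c ℓ z

/-
For each multipole the LASSO basic inequality, combined with the deviation bound and the
sparsity of `φ_ℓ`, confines the error `Δ = φ̂_ℓ - φ_ℓ` to the cone `‖Δ_{Sᶜ}‖₁ ≤ 3 ‖Δ_S‖₁`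
(`S` the support of `φ_ℓ`). There `‖Δ‖₁ ≤ 4 √q_ℓ ‖Δ‖₂`, so the restricted eigenvalue condition
gives curvature `α_ℓ / 2`, whence `‖Δ‖₂ ≤ 3 λ √q_ℓ / α_ℓ`. Since `|P_ℓ| ≤ 1` on `[-1, 1]`, the
error `k̂ - k_L` of the truncated estimator is uniformly bounded by the sum in the claim, and the
triangle inequality in `L∞` finishes.

The bound `|P_ℓ| ≤ 1` comes from Legendre's equation
`(1 - z²) P'' - 2 z P' + ℓ (ℓ + 1) P = 0`: it makes `ℓ (ℓ + 1) P² + (1 - z²) P'²` have derivative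
`2 z P'²`, so this function is maximal at `z = ±1`, where it equals `ℓ (ℓ + 1)`.
-/

namespace Polynomial

theorem iteratedDeriv_eval {𝕜 : Type*} [NontriviallyNormedField 𝕜] (p : 𝕜[X]) (n : ℕ) :
    iteratedDeriv n (fun x => p.eval x) = fun x => (derivative^[n] p).eval x := by
  induction n generalizing p with
  | zero => simp
  | succ n ih =>
    rw [iteratedDeriv_succ', Function.iterate_succ_apply, ← ih]
    congr 1
    funext x
    exact Polynomial.deriv p

theorem eval_iterate_derivative_X_sub_C_pow_mul {R : Type*} [CommRing R] (a : R) (n : ℕ)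
    (g : R[X]) : (derivative^[n] ((X - C a) ^ n * g)).eval a = n.factorial * g.eval a := by
  induction n generalizing g with
  | zero => simp
  | succ n ih =>
    have hd : derivative ((X - C a) ^ (n + 1) * g)
        = (X - C a) ^ n * (((n + 1 : ℕ) : R[X]) * g + (X - C a) * derivative g) := by
      simp only [derivative_mul, derivative_pow, derivative_sub, derivative_X, derivative_C,
        Nat.add_sub_cancel, C_eq_natCast]
      push_cast
      ring
    rw [Function.iterate_succ_apply, hd, ih]
    simp only [Nat.cast_add, Nat.cast_one, eval_add, eval_mul, eval_natCast, eval_one, eval_sub,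
      eval_X, eval_C, sub_self, zero_mul, add_zero, Nat.factorial_succ, Nat.cast_mul]
    ring

theorem sq_eval_le_max_of_legendre_ode {Q : ℝ[X]} {ν : ℝ} (hν : 0 < ν)
    (hQ : (1 - X ^ 2) * derivative (derivative Q) - 2 * X * derivative Q + C ν * Q = 0)
    {x : ℝ} (hx : x ∈ Set.Icc (-1) 1) :
    Q.eval x ^ 2 ≤ max (Q.eval 1 ^ 2) (Q.eval (-1) ^ 2) := by
  set F : ℝ[X] := C ν * Q ^ 2 + (1 - X ^ 2) * derivative Q ^ 2
  have hF' : derivative F = 2 * X * derivative Q ^ 2 := by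
    simp only [F, derivative_add, derivative_mul, derivative_C, derivative_pow, derivative_sub,
      derivative_one, derivative_X]
    simp only [map_ofNat, Nat.cast_ofNat]
    linear_combination (2 * derivative Q) * hQ
  have hderiv (y : ℝ) : deriv (fun y => F.eval y) y = 2 * y * (derivative Q).eval y ^ 2 := by
    simp [Polynomial.deriv, hF']
  have hFx : F.eval x ≤ max (F.eval 1) (F.eval (-1)) := by
    obtain ⟨hx₁, hx₂⟩ := hx
    rcases le_total 0 x with hx₀ | hx₀
    · refine le_max_of_le_left (monotoneOn_of_deriv_nonneg (convex_Icc 0 1)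
        F.continuous.continuousOn F.differentiable.differentiableOn (fun y hy => ?_)
        ⟨hx₀, hx₂⟩ ⟨zero_le_one, le_rfl⟩ hx₂)
      rw [interior_Icc] at hy
      rw [hderiv]
      have hy₀ := hy.1.le
      positivity
    · refine le_max_of_le_right (antitoneOn_of_deriv_nonpos (convex_Icc (-1) 0)
        F.continuous.continuousOn F.differentiable.differentiableOn (fun y hy => ?_)
        ⟨le_rfl, by norm_num⟩ ⟨hx₁, hx₀⟩ hx₁)
      rw [interior_Icc] at hy
      rw [hderiv]
      nlinarith [hy.2, sq_nonneg ((derivative Q).eval y)]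
  have hνQ : ν * Q.eval x ^ 2 ≤ F.eval x := by
    have hrest : 0 ≤ (1 - x ^ 2) * (derivative Q).eval x ^ 2 := by
      have hx2 : x ^ 2 ≤ 1 := by nlinarith [hx.1, hx.2]
      nlinarith [sq_nonneg ((derivative Q).eval x)]
    simp only [F, eval_add, eval_mul, eval_C, eval_pow, eval_sub, eval_one, eval_X]
    linarith
  have hF1 : F.eval 1 = ν * Q.eval 1 ^ 2 := by simp [F]
  have hFm1 : F.eval (-1) = ν * Q.eval (-1) ^ 2 := by simp [F]
  rw [hF1, hFm1] at hFx
  rw [← mul_le_mul_iff_right₀ hν, mul_max_of_nonneg _ _ hν.le]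
  exact hνQ.trans hFx

theorem iterate_derivative_sq_sub_one_pow_ode (ℓ : ℕ) :
    (1 - X ^ 2) * derivative^[ℓ + 2] ((X ^ 2 - 1 : ℝ[X]) ^ ℓ)
      - 2 * X * derivative^[ℓ + 1] ((X ^ 2 - 1 : ℝ[X]) ^ ℓ)
      + (ℓ * (ℓ + 1) : ℝ[X]) * derivative^[ℓ] ((X ^ 2 - 1 : ℝ[X]) ^ ℓ) = 0 := by
  cases ℓ with
  | zero => simp
  | succ m =>
  set u : ℝ[X] := (X ^ 2 - 1) ^ (m + 1)
  have hu1 : (X ^ 2 - 1) * derivative u = C (2 * ((m : ℝ) + 1)) * (X * u) := by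
    simp only [u, derivative_pow, derivative_sub, derivative_one, derivative_X,
      map_mul, map_add, map_natCast, map_one, C_ofNat]
    push_cast
    ring
  have hu2 : derivative^[2] u * X ^ 2 - derivative^[2] u
      = C (2 * (m : ℝ)) * (derivative u * X) + C (2 * ((m : ℝ) + 1)) * u := by
    have h := congrArg derivative hu1
    simp only [derivative_mul, derivative_sub, derivative_X_pow, derivative_one, derivative_X,
      derivative_C] at h
    simp only [Function.iterate_succ_apply', Function.iterate_zero_apply, map_mul, map_add,
      map_natCast, map_one, C_ofNat] at h ⊢
    linear_combination h
  have h := congrArg (derivative^[m + 1]) hu2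
  rw [iterate_derivative_sub, iterate_derivative_derivative_mul_X_sq, iterate_map_add,
    iterate_derivative_C_mul, iterate_derivative_C_mul, iterate_derivative_derivative_mul_X,
    ← Function.iterate_add_apply] at h
  simp only [map_mul, map_add, map_natCast, map_one, C_ofNat, nsmul_eq_mul,
    Nat.add_sub_cancel] at h
  push_cast at h ⊢
  linear_combination -h

end Polynomial

open Polynomial in
noncomputable def legendrePoly (ℓ : ℕ) : ℝ[X] :=
  C (1 / ((2 : ℝ) ^ ℓ * (Nat.factorial ℓ : ℝ))) * derivative^[ℓ] ((X ^ 2 - 1) ^ ℓ)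

namespace legendrePoly
open Polynomial

theorem eval_eq_legendreP (ℓ : ℕ) (u : ℝ) : (legendrePoly ℓ).eval u = legendreP ℓ u := by
  have h : (fun x : ℝ => (x ^ 2 - 1) ^ ℓ) = fun x => ((X ^ 2 - 1 : ℝ[X]) ^ ℓ).eval x := by
    simp
  simp [legendrePoly, legendreP, h, iteratedDeriv_eval]

theorem ode (ℓ : ℕ) :
    (1 - X ^ 2) * derivative (derivative (legendrePoly ℓ)) - 2 * X * derivative (legendrePoly ℓ)
      + C ((ℓ : ℝ) * (ℓ + 1)) * legendrePoly ℓ = 0 := by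
  simp only [legendrePoly, derivative_C_mul, ← Function.iterate_succ_apply' (f := ⇑derivative),
    map_mul, map_add, map_natCast, map_one]
  linear_combination
    C (1 / ((2 : ℝ) ^ ℓ * (Nat.factorial ℓ : ℝ))) * iterate_derivative_sq_sub_one_pow_ode ℓ

theorem eval_of_sq_eq_one (ℓ : ℕ) {a : ℝ} (ha : a ^ 2 = 1) :
    (legendrePoly ℓ).eval a = a ^ ℓ := by
  have hfac : (X ^ 2 - 1 : ℝ[X]) ^ ℓ = (X - C a) ^ ℓ * (X + C a) ^ ℓ := by
    rw [← mul_pow, mul_comm, ← sq_sub_sq, ← C_pow, ha, C_1]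
  rw [legendrePoly, eval_mul, eval_C, hfac, eval_iterate_derivative_X_sub_C_pow_mul]
  simp only [eval_pow, eval_add, eval_X, eval_C]
  field_simp
  ring

end legendrePoly

theorem abs_legendreP_le_one (ℓ : ℕ) {x : ℝ} (hx : x ∈ Set.Icc (-1 : ℝ) 1) :
    |legendreP ℓ x| ≤ 1 := by
  rw [← legendrePoly.eval_eq_legendreP, ← sq_le_one_iff_abs_le_one]
  rcases Nat.eq_zero_or_pos ℓ with rfl | hℓ
  · simp [legendrePoly]
  have h := Polynomial.sq_eval_le_max_of_legendre_ode (by positivity) (legendrePoly.ode ℓ) hx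
  rw [legendrePoly.eval_of_sq_eq_one ℓ (one_pow 2),
    legendrePoly.eval_of_sq_eq_one ℓ (a := -1) (by norm_num)] at h
  simpa using h

section Norms

variable {n : ℕ}

theorem l1_nonneg (v : Fin n → ℝ) : 0 ≤ l1 v := Finset.sum_nonneg fun i _ => abs_nonneg (v i)

theorem l2_nonneg (v : Fin n → ℝ) : 0 ≤ l2 v := Real.sqrt_nonneg _

theorem sq_l2 (v : Fin n → ℝ) : l2 v ^ 2 = ∑ i, v i ^ 2 :=
  Real.sq_sqrt (Finset.sum_nonneg fun i _ => sq_nonneg (v i))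

theorem l2_eq_norm (v : Fin n → ℝ) : l2 v = ‖WithLp.toLp 2 v‖ := by
  simp [l2, EuclideanSpace.norm_eq]

theorem l2_sub_comm (u v : Fin n → ℝ) : l2 (u - v) = l2 (v - u) := by
  rw [l2_eq_norm, l2_eq_norm, WithLp.toLp_sub, WithLp.toLp_sub, norm_sub_rev]

theorem abs_l2_sub_l2_le (u v : Fin n → ℝ) : |l2 u - l2 v| ≤ l2 (u - v) := by
  rw [l2_eq_norm, l2_eq_norm, l2_eq_norm, WithLp.toLp_sub]
  exact abs_norm_sub_norm_le _ _

theorem abs_dotProduct_le_linf_mul_l1 (v w : Fin n → ℝ) : |v ⬝ᵥ w| ≤ linf v * l1 w := by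
  have hv (i : Fin n) : |v i| ≤ linf v := le_ciSup (Set.finite_range fun j => |v j|).bddAbove i
  calc |v ⬝ᵥ w| ≤ ∑ i, |v i * w i| := Finset.abs_sum_le_sum_abs _ _
    _ ≤ ∑ i, linf v * |w i| := by
        gcongr with i
        rw [abs_mul]
        exact mul_le_mul_of_nonneg_right (hv i) (abs_nonneg _)
    _ = linf v * l1 w := by rw [l1, Finset.mul_sum]

theorem sum_abs_le_sqrt_card_mul_l2 (S : Finset (Fin n)) (v : Fin n → ℝ) :
    ∑ i ∈ S, |v i| ≤ √(#S : ℝ) * l2 v := by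
  rw [← Real.sqrt_sq (l2_nonneg v), ← Real.sqrt_mul (Nat.cast_nonneg _)]
  refine Real.le_sqrt_of_sq_le ?_
  calc (∑ i ∈ S, |v i|) ^ 2 ≤ #S * ∑ i ∈ S, |v i| ^ 2 := sq_sum_le_card_mul_sum_sq
    _ = #S * ∑ i ∈ S, v i ^ 2 := by simp only [sq_abs]
    _ ≤ #S * ∑ i, v i ^ 2 := by
      gcongr
      exact S.subset_univ
    _ = #S * l2 v ^ 2 := by rw [sq_l2]

theorem l1_sub_l1_add_le (φ Δ : Fin n → ℝ) (S : Finset (Fin n)) (hφ : ∀ i ∉ S, φ i = 0) :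
    l1 φ - l1 (φ + Δ) ≤ ∑ i ∈ S, |Δ i| - ∑ i ∈ Sᶜ, |Δ i| := by
  simp only [l1, ← Finset.sum_add_sum_compl S, Pi.add_apply]
  have hS : ∑ i ∈ S, (|φ i| - |φ i + Δ i|) ≤ ∑ i ∈ S, |Δ i| :=
    Finset.sum_le_sum fun i _ => by
      have := abs_add_le (φ i + Δ i) (-Δ i)
      rw [add_neg_cancel_right, abs_neg] at this
      linarith
  have hSc : ∑ i ∈ Sᶜ, |φ i + Δ i| = ∑ i ∈ Sᶜ, |Δ i| := Finset.sum_congr rfl fun i hi => by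
    rw [hφ i (Finset.mem_compl.1 hi), zero_add]
  have hSc' : ∑ i ∈ Sᶜ, |φ i| = 0 := Finset.sum_eq_zero fun i hi => by
    rw [hφ i (Finset.mem_compl.1 hi), abs_zero]
  rw [Finset.sum_sub_distrib] at hS
  linarith

end Norms

section Lasso

variable {m p : ℕ}

theorem dotProduct_smul_gram_mulVec (c : ℝ) (X : Matrix (Fin m) (Fin p) ℝ) (θ : Fin p → ℝ) :
    θ ⬝ᵥ ((c • (Xᵀ * X)) *ᵥ θ) = c * ∑ i, (X *ᵥ θ) i ^ 2 := by
  rw [smul_mulVec, dotProduct_smul, ← mulVec_mulVec, dotProduct_mulVec, ← mulVec_transpose,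
    transpose_transpose, smul_eq_mul, dotProduct]
  simp only [sq]

theorem lasso_basic_inequality (c lam : ℝ) (X : Matrix (Fin m) (Fin p) ℝ) (E : Fin m → ℝ)
    (φ φhat : Fin p → ℝ)
    (hmin : c * (∑ i, ((X *ᵥ φ + E) i - (X *ᵥ φhat) i) ^ 2) + lam * l1 φhat
        ≤ c * (∑ i, ((X *ᵥ φ + E) i - (X *ᵥ φ) i) ^ 2) + lam * l1 φ) :
    (φhat - φ) ⬝ᵥ ((c • (Xᵀ * X)) *ᵥ (φhat - φ))
      ≤ 2 * ((c • (Xᵀ *ᵥ E)) ⬝ᵥ (φhat - φ)) + lam * (l1 φ - l1 φhat) := by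
  have hcross : (c • (Xᵀ *ᵥ E)) ⬝ᵥ (φhat - φ) = c * ∑ i, E i * (X *ᵥ (φhat - φ)) i := by
    rw [smul_dotProduct, mulVec_transpose, ← dotProduct_mulVec, smul_eq_mul, dotProduct]
  have hres : ∑ i, ((X *ᵥ φ + E) i - (X *ᵥ φhat) i) ^ 2
      = ∑ i, E i ^ 2 - 2 * ∑ i, E i * (X *ᵥ (φhat - φ)) i + ∑ i, (X *ᵥ (φhat - φ)) i ^ 2 := by
    simp only [mulVec_sub, Pi.add_apply, Pi.sub_apply, Finset.mul_sum, ← Finset.sum_sub_distrib,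
      ← Finset.sum_add_distrib]
    exact Finset.sum_congr rfl fun i _ => by ring
  rw [hres] at hmin
  simp only [Pi.add_apply, add_sub_cancel_left] at hmin
  rw [dotProduct_smul_gram_mulVec, hcross]
  linarith

theorem l2_sub_le_of_lasso_basic_inequality {q : ℕ} {lam α τ : ℝ}
    (Γ : Matrix (Fin p) (Fin p) ℝ) (w φ φhat : Fin p → ℝ) (hlam : 0 < lam) (hα : 0 < α)
    (hτ : 0 ≤ τ) (hsparse : #(univ.filter fun i => φ i ≠ 0) ≤ q) (hw : linf w ≤ lam / 4)
    (hRE : RECond Γ α τ) (hqτ : (q : ℝ) * τ ≤ α / 32)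
    (hΓ : 0 ≤ (φhat - φ) ⬝ᵥ (Γ *ᵥ (φhat - φ)))
    (hbasic : (φhat - φ) ⬝ᵥ (Γ *ᵥ (φhat - φ))
      ≤ 2 * (w ⬝ᵥ (φhat - φ)) + lam * (l1 φ - l1 φhat)) :
    l2 (φhat - φ) ≤ 3 * lam * √q / α := by
  set Δ := φhat - φ
  set S := univ.filter fun i => φ i ≠ 0
  set a := ∑ i ∈ S, |Δ i|
  set b := ∑ i ∈ Sᶜ, |Δ i|
  set t := l2 Δ
  have hab : l1 Δ = a + b := (Finset.sum_add_sum_compl S _).symm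
  have hb : 0 ≤ b := Finset.sum_nonneg fun i _ => abs_nonneg (Δ i)
  have hnoise : |w ⬝ᵥ Δ| ≤ lam / 4 * l1 Δ :=
    (abs_dotProduct_le_linf_mul_l1 w Δ).trans
      (mul_le_mul_of_nonneg_right hw (l1_nonneg Δ))
  have hsupp : l1 φ - l1 φhat ≤ a - b := by
    have := l1_sub_l1_add_le φ Δ S fun i hi => by simpa [S] using hi
    rwa [add_sub_cancel] at this
  have hquad : Δ ⬝ᵥ (Γ *ᵥ Δ) ≤ lam / 2 * (3 * a - b) := by
    nlinarith [abs_le.1 hnoise]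
  have hcone : b ≤ 3 * a := by nlinarith
  have ha : a ≤ √q * t := (sum_abs_le_sqrt_card_mul_l2 S Δ).trans
    (mul_le_mul_of_nonneg_right (Real.sqrt_le_sqrt (by exact_mod_cast hsparse)) (l2_nonneg Δ))
  have hl1 : l1 Δ ≤ 4 * √q * t := by linarith
  have hcurv : α / 2 * t ^ 2 ≤ Δ ⬝ᵥ (Γ *ᵥ Δ) := by
    have hl1sq : l1 Δ ^ 2 ≤ 16 * q * t ^ 2 := by
      have := pow_le_pow_left₀ (l1_nonneg Δ) hl1 2
      rw [mul_pow, mul_pow, Real.sq_sqrt (Nat.cast_nonneg q)] at this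
      linarith
    nlinarith [hRE Δ, mul_le_mul_of_nonneg_left hl1sq hτ]
  have hsq : α * t * t ≤ 3 * lam * √q * t := by nlinarith
  rw [le_div_iff₀ hα, mul_comm]
  rcases (show 0 ≤ t from l2_nonneg Δ).eq_or_lt with ht | ht
  · rw [← ht, mul_zero]
    positivity
  · exact le_of_mul_le_mul_right hsq ht

theorem lasso_l2_error_le {q : ℕ} {lam α τ : ℝ} (X : Matrix (Fin m) (Fin p) ℝ)
    (φ φhat : Fin p → ℝ) (E Y : Fin m → ℝ) (hlam : 0 < lam) (hα : 0 < α) (hτ : 0 ≤ τ)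
    (hsparse : #(univ.filter fun i => φ i ≠ 0) ≤ q) (hY : Y = X *ᵥ φ + E)
    (hmin : (m : ℝ)⁻¹ * (∑ i, (Y i - (X *ᵥ φhat) i) ^ 2) + lam * l1 φhat
        ≤ (m : ℝ)⁻¹ * (∑ i, (Y i - (X *ᵥ φ) i) ^ 2) + lam * l1 φ)
    (hdev : linf ((m : ℝ)⁻¹ • (Xᵀ *ᵥ E)) ≤ lam / 4)
    (hRE : RECond ((m : ℝ)⁻¹ • (Xᵀ * X)) α τ) (hqτ : (q : ℝ) * τ ≤ α / 32) :
    l2 (φhat - φ) ≤ 3 * lam * √q / α := by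
  subst hY
  refine l2_sub_le_of_lasso_basic_inequality _ _ φ φhat hlam hα hτ hsparse hdev hRE hqτ ?_
    (lasso_basic_inequality _ lam X E φ φhat hmin)
  rw [dotProduct_smul_gram_mulVec]
  positivity

end Lasso

theorem l2_legendreSum_sub_le {p : ℕ} (a b : ℕ → Fin p → ℝ) (n : ℕ) {z : ℝ}
    (hz : z ∈ Set.Icc (-1 : ℝ) 1) :
    l2 (legendreSum a n z - legendreSum b n z)
      ≤ ∑ ℓ ∈ range n, (2 * (ℓ : ℝ) + 1) / (4 * π) * l2 (a ℓ - b ℓ) := by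
  simp only [legendreSum, legendreTerm, ← Finset.sum_sub_distrib, ← smul_sub, l2_eq_norm,
    WithLp.toLp_sum, WithLp.toLp_smul]
  refine (norm_sum_le _ _).trans (Finset.sum_le_sum fun ℓ _ => ?_)
  have hc : 0 ≤ (2 * (ℓ : ℝ) + 1) / (4 * π) := by positivity
  rw [norm_smul, Real.norm_eq_abs, abs_mul, abs_of_nonneg hc]
  gcongr
  exact mul_le_of_le_one_right hc (abs_legendreP_le_one ℓ hz)

theorem Real.iSup_le_add_iSup_of_abs_sub_le {ι : Sort*} [Nonempty ι] {f g : ι → ℝ} {C : ℝ}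
    (h : ∀ i, |f i - g i| ≤ C) : ⨆ i, f i ≤ C + ⨆ i, g i := by
  by_cases hg : BddAbove (Set.range g)
  · exact ciSup_le fun i => by linarith [(abs_le.1 (h i)).2, le_ciSup hg i]
  · -- both suprema are the junk value `sSup ∅`
    have hf : ¬BddAbove (Set.range f) := fun ⟨B, hB⟩ => hg ⟨B + C, by
      rintro _ ⟨i, rfl⟩
      linarith [(abs_le.1 (h i)).1, hB ⟨i, rfl⟩]⟩
    have hC : 0 ≤ C := (abs_nonneg _).trans (h (Classical.arbitrary ι))
    rw [ciSup_of_not_bddAbove hf, ciSup_of_not_bddAbove hg]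
    linarith

theorem oracle_inequality_sup_general (p L : ℕ)
    (lam : ℝ) (hlam : 0 < lam)
    (M : ℕ → ℕ)
    (X : (ℓ : ℕ) → Matrix (Fin (M ℓ)) (Fin p) ℝ)
    (φ : ℕ → Fin p → ℝ) (q : ℕ → ℕ)
    (hsparse : ∀ ℓ < L, (Finset.univ.filter fun i => φ ℓ i ≠ 0).card ≤ q ℓ)
    (E : (ℓ : ℕ) → Fin (M ℓ) → ℝ)
    (Y : (ℓ : ℕ) → Fin (M ℓ) → ℝ)
    (hY : ∀ ℓ < L, Y ℓ = X ℓ *ᵥ φ ℓ + E ℓ)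
    (φhat : ℕ → Fin p → ℝ)
    (hmin : ∀ ℓ < L, ∀ β : Fin p → ℝ,
      (M ℓ : ℝ)⁻¹ * (∑ i, (Y ℓ i - (X ℓ *ᵥ φhat ℓ) i) ^ 2) + lam * l1 (φhat ℓ)
        ≤ (M ℓ : ℝ)⁻¹ * (∑ i, (Y ℓ i - (X ℓ *ᵥ β) i) ^ 2) + lam * l1 β)
    (hdev : ∀ ℓ < L, linf ((M ℓ : ℝ)⁻¹ • ((X ℓ)ᵀ *ᵥ E ℓ)) ≤ lam / 4)
    (α τ : ℕ → ℝ) (hα : ∀ ℓ < L, 0 < α ℓ) (hτ : ∀ ℓ < L, 0 < τ ℓ)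
    (hRE : ∀ ℓ < L, RECond ((M ℓ : ℝ)⁻¹ • ((X ℓ)ᵀ * X ℓ)) (α ℓ) (τ ℓ))
    (hqτ : ∀ ℓ < L, (q ℓ : ℝ) * τ ℓ ≤ α ℓ / 32)
    (k : ℝ → Fin p → ℝ) :
    (⨆ z : Set.Icc (-1 : ℝ) 1, l2 (legendreSum φhat L (z : ℝ) - k (z : ℝ)))
      ≤ (3 / π) * lam
          * (∑ ℓ ∈ Finset.range L, (Real.sqrt (q ℓ) / α ℓ) * (2 * (ℓ : ℝ) + 1))
        + ⨆ z : Set.Icc (-1 : ℝ) 1, l2 (k (z : ℝ) - legendreSum φ L (z : ℝ)) := by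
  have hlasso (ℓ : ℕ) (hℓ : ℓ < L) : l2 (φhat ℓ - φ ℓ) ≤ 3 * lam * √(q ℓ) / α ℓ :=
    lasso_l2_error_le (X ℓ) (φ ℓ) (φhat ℓ) (E ℓ) (Y ℓ) hlam (hα ℓ hℓ) (hτ ℓ hℓ).le
      (hsparse ℓ hℓ) (hY ℓ hℓ) (hmin ℓ hℓ (φ ℓ)) (hdev ℓ hℓ) (hRE ℓ hℓ) (hqτ ℓ hℓ)
  have hest (z : ℝ) (hz : z ∈ Set.Icc (-1 : ℝ) 1) :
      l2 (legendreSum φhat L z - legendreSum φ L z)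
        ≤ (3 / π) * lam * (∑ ℓ ∈ range L, (√(q ℓ) / α ℓ) * (2 * (ℓ : ℝ) + 1)) := by
    rw [Finset.mul_sum]
    refine (l2_legendreSum_sub_le φhat φ L hz).trans (Finset.sum_le_sum fun ℓ hℓ => ?_)
    have hℓ := Finset.mem_range.1 hℓ
    have hαℓ := hα ℓ hℓ
    calc (2 * (ℓ : ℝ) + 1) / (4 * π) * l2 (φhat ℓ - φ ℓ)
        ≤ (2 * (ℓ : ℝ) + 1) / (4 * π) * (3 * lam * √(q ℓ) / α ℓ) := by gcongr; exact hlasso ℓ hℓ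
      _ = (3 / π * lam * (√(q ℓ) / α ℓ * (2 * ℓ + 1))) / 4 := by ring
      _ ≤ 3 / π * lam * (√(q ℓ) / α ℓ * (2 * ℓ + 1)) := div_le_self (by positivity) (by norm_num)
  have : Nonempty (Set.Icc (-1 : ℝ) 1) := ⟨⟨0, by norm_num, by norm_num⟩⟩
  refine Real.iSup_le_add_iSup_of_abs_sub_le fun z => ?_
  rw [l2_sub_comm (k z)]
  refine (abs_l2_sub_l2_le _ _).trans ?_
  rw [sub_sub_sub_cancel_right]
  exact hest z z.2

/-- **Oracle inequality in the sup norm for the LASSO estimator of spherical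
autoregressive kernels.**  For each multipole `ℓ < L`, `φ̂_ℓ` is any minimizer of the
`ℓ¹`-penalized least squares objective; under the deviation condition and the
restricted eigenvalue condition for each sample Gram matrix `Γ̂_ℓ = X_ℓᵀX_ℓ/M_ℓ`,
`‖k̂ − k‖_{L∞} ≤ (3/π) λ ∑_{ℓ<L} (√q_ℓ/α_ℓ)(2ℓ+1) + ‖k − k_L‖_{L∞}`. -/
theorem oracle_inequality_sup (p L : ℕ) (hp : 1 ≤ p) (hL : 1 ≤ L)
    (lam : ℝ) (hlam : 0 < lam)
    (M : ℕ → ℕ) (hM : ∀ ℓ < L, 1 ≤ M ℓ)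
    (X : (ℓ : ℕ) → Matrix (Fin (M ℓ)) (Fin p) ℝ)
    (φ : ℕ → Fin p → ℝ) (q : ℕ → ℕ)
    (hsparse : ∀ ℓ < L, (Finset.univ.filter fun i => φ ℓ i ≠ 0).card ≤ q ℓ)
    (E : (ℓ : ℕ) → Fin (M ℓ) → ℝ)
    (Y : (ℓ : ℕ) → Fin (M ℓ) → ℝ)
    (hY : ∀ ℓ < L, Y ℓ = X ℓ *ᵥ φ ℓ + E ℓ)
    (φhat : ℕ → Fin p → ℝ)
    (hmin : ∀ ℓ < L, ∀ β : Fin p → ℝ,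
      (M ℓ : ℝ)⁻¹ * (∑ i, (Y ℓ i - (X ℓ *ᵥ φhat ℓ) i) ^ 2) + lam * l1 (φhat ℓ)
        ≤ (M ℓ : ℝ)⁻¹ * (∑ i, (Y ℓ i - (X ℓ *ᵥ β) i) ^ 2) + lam * l1 β)
    (hdev : ∀ ℓ < L, linf ((M ℓ : ℝ)⁻¹ • ((X ℓ)ᵀ *ᵥ E ℓ)) ≤ lam / 4)
    (α τ : ℕ → ℝ) (hα : ∀ ℓ < L, 0 < α ℓ) (hτ : ∀ ℓ < L, 0 < τ ℓ)
    (hRE : ∀ ℓ < L, RECond ((M ℓ : ℝ)⁻¹ • ((X ℓ)ᵀ * X ℓ)) (α ℓ) (τ ℓ))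
    (hqτ : ∀ ℓ < L, (q ℓ : ℝ) * τ ℓ ≤ α ℓ / 32)
    (hsum : Summable fun ℓ : ℕ => l2 (φ ℓ) * (2 * (ℓ : ℝ) + 1))
    (k : ℝ → Fin p → ℝ)
    (habs : ∀ z ∈ Set.Icc (-1 : ℝ) 1, Summable fun ℓ : ℕ => l2 (legendreTerm φ ℓ z))
    (hunif : Tendsto (fun n : ℕ =>
        ⨆ z : Set.Icc (-1 : ℝ) 1, l2 (k (z : ℝ) - legendreSum φ n (z : ℝ)))
      atTop (nhds 0))
    (hptw : ∀ z ∈ Set.Icc (-1 : ℝ) 1, k z = ∑' ℓ : ℕ, legendreTerm φ ℓ z) :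
    (⨆ z : Set.Icc (-1 : ℝ) 1, l2 (legendreSum φhat L (z : ℝ) - k (z : ℝ)))
      ≤ (3 / π) * lam
          * (∑ ℓ ∈ Finset.range L, (Real.sqrt (q ℓ) / α ℓ) * (2 * (ℓ : ℝ) + 1))
        + ⨆ z : Set.Icc (-1 : ℝ) 1, l2 (k (z : ℝ) - legendreSum φ L (z : ℝ)) :=
  oracle_inequality_sup_general p L lam hlam M X φ q hsparse E Y hY φhat hmin hdev α τ hα hτ hRE hqτ
    k
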